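/- Let (a_{ijkl}) be a smooth tensor on ℝⁿ with symmetries a_{ijkl} = a_{jikl} = a_{klij}, let φ ∈ C¹(ℝⁿ), let H = φ(x)x act on scalar functions by H(g) = φ(x)∑_m x_m ∂g/∂x_m, and let u ∈ C²(ℝⁿ; ℝⁿ). Then the pointwise multiplier identity holds for x ≠ 0: σ(u) ⊙ ∇(H(u)) = φ(x) ∑_{ijkl} (a_{ijkl} − (r/2)∂a_{ijkl}/∂r) ε_{ij}(u)ε_{kl}(u) + ½ H(σ(u) ⊙ ε(u)) + ∑_{i,j,m} σ_{ij}(u) (∂φ/∂x_j) x_m (∂u_i/∂x_m), where ∇(H(u)) is the matrix with (i,j) entry ∂(H(u_i))/∂x_j. -/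

import Mathlib

open MeasureTheory Real Filter

noncomputable section

variable {n : ℕ}

/-- Partial derivative of a scalar function in the `j`-th coordinate direction. -/
def pd (g : EuclideanSpace ℝ (Fin n) → ℝ) (x : EuclideanSpace ℝ (Fin n)) (j : Fin n) : ℝ :=
  fderiv ℝ g x (EuclideanSpace.single j 1)

/-- Symmetrized gradient `ε_{ij}(v) = (∂v_i/∂x_j + ∂v_j/∂x_i)/2`. -/
def eps (v : Fin n → EuclideanSpace ℝ (Fin n) → ℝ) (x : EuclideanSpace ℝ (Fin n))
    (i j : Fin n) : ℝ :=
  (pd (v i) x j + pd (v j) x i) / 2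

/-- Stress tensor `σ_{ij}(v) = ∑_{k,l} a_{ijkl}(x) ε_{kl}(v)`. -/
def sig (a4 : EuclideanSpace ℝ (Fin n) → Fin n → Fin n → Fin n → Fin n → ℝ)
    (v : Fin n → EuclideanSpace ℝ (Fin n) → ℝ) (x : EuclideanSpace ℝ (Fin n))
    (i j : Fin n) : ℝ :=
  ∑ k, ∑ l, a4 x i j k l * eps v x k l

/-- `B ⊙ D = ∑_{i,j} B_{ij} D_{ji}`. -/
def odot (B D : Fin n → Fin n → ℝ) : ℝ := ∑ i, ∑ j, B i j * D j i

/-- The time slice `u(·, t)` of a time-dependent vector field. -/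
def tslice (u : Fin n → EuclideanSpace ℝ (Fin n) → ℝ → ℝ) (t : ℝ) :
    Fin n → EuclideanSpace ℝ (Fin n) → ℝ :=
  fun i x => u i x t

/-- Time derivative `∂u_i/∂t`. -/
def ut (u : Fin n → EuclideanSpace ℝ (Fin n) → ℝ → ℝ) (i : Fin n)
    (x : EuclideanSpace ℝ (Fin n)) (t : ℝ) : ℝ :=
  deriv (fun s => u i x s) t

/-- Second time derivative `∂²u_i/∂t²`. -/
def utt (u : Fin n → EuclideanSpace ℝ (Fin n) → ℝ → ℝ) (i : Fin n)
    (x : EuclideanSpace ℝ (Fin n)) (t : ℝ) : ℝ :=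
  deriv (fun s => ut u i x s) t

/- ### Auxiliary lemmas -/

lemma sum_swap4' {n : ℕ} (f : Fin n → Fin n → Fin n → Fin n → ℝ) :
    ∑ i, ∑ j, ∑ k, ∑ l, f i j k l = ∑ k, ∑ l, ∑ i, ∑ j, f i j k l := by
  have h : ∑ p : Fin n × Fin n, ∑ q : Fin n × Fin n, f p.1 p.2 q.1 q.2
      = ∑ q : Fin n × Fin n, ∑ p : Fin n × Fin n, f p.1 p.2 q.1 q.2 := Finset.sum_comm
  simpa [Fintype.sum_prod_type] using h

/-- Purely algebraic form of the multiplier identity. -/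
lemma key_alg (n : ℕ) (A DA : Fin n → Fin n → Fin n → Fin n → ℝ)
    (E Ep N P : Fin n → Fin n → ℝ) (F X : Fin n → ℝ) (p : ℝ)
    (hA1 : ∀ i j k l, A i j k l = A j i k l)
    (hA2 : ∀ i j k l, A i j k l = A k l i j)
    (hE : ∀ i j, E i j = E j i)
    (hEp : ∀ i j, Ep i j = Ep j i)
    (hPE : ∀ i j, P i j + P j i = 2 * E i j)
    (hNE : ∀ i j, N i j + N j i = 2 * Ep i j) :
    ∑ i, ∑ j, (∑ k, ∑ l, A i j k l * E k l) *
        (F i * (∑ m, X m * P j m) + p * (N j i + P j i))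
      = p * (∑ i, ∑ j, ∑ k, ∑ l, (A i j k l - (1/2) * DA i j k l) * E i j * E k l)
        + (1/2) * (p * (∑ i, ∑ j, ∑ k, ∑ l,
            (DA i j k l * E k l * E j i + A i j k l * Ep k l * E j i
              + A i j k l * E k l * Ep j i)))
        + ∑ i, ∑ j, ∑ m, (∑ k, ∑ l, A i j k l * E k l) * F j * (X m * P i m) := by
  set S : Fin n → Fin n → ℝ := fun i j => ∑ k, ∑ l, A i j k l * E k l with hSdef
  have hS : ∀ i j, S i j = S j i := fun i j =>
    Finset.sum_congr rfl fun k _ => Finset.sum_congr rfl fun l _ => by rw [hA1]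
  have swapS : ∀ (R : Fin n → Fin n → ℝ),
      ∑ i, ∑ j, S i j * R j i = ∑ i, ∑ j, S i j * R i j := by
    intro R
    rw [Finset.sum_comm]
    exact Finset.sum_congr rfl fun i _ => Finset.sum_congr rfl fun j _ => by rw [hS]
  have symsum : ∀ (R Q : Fin n → Fin n → ℝ), (∀ i j, R i j + R j i = 2 * Q i j) →
      ∑ i, ∑ j, S i j * R j i = ∑ i, ∑ j, S i j * Q i j := by
    intro R Q hRQ
    have h1 := swapS R
    have h2 : ∑ i, ∑ j, (S i j * R i j + S i j * R j i) = ∑ i, ∑ j, 2 * (S i j * Q i j) :=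
      Finset.sum_congr rfl fun i _ => Finset.sum_congr rfl fun j _ => by
        rw [← mul_add, hRQ]; ring
    simp only [Finset.sum_add_distrib, ← Finset.mul_sum] at h2
    linarith [h1, h2]
  have expSQ : ∀ (Q : Fin n → Fin n → ℝ),
      ∑ i, ∑ j, S i j * Q i j = ∑ i, ∑ j, ∑ k, ∑ l, A i j k l * E k l * Q i j := by
    intro Q
    exact Finset.sum_congr rfl fun i _ => Finset.sum_congr rfl fun j _ => by
      rw [hSdef]; simp [Finset.sum_mul]
  have lhs_exp : ∑ i, ∑ j, S i j * (F i * (∑ m, X m * P j m) + p * (N j i + P j i))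
      = (∑ i, ∑ j, S i j * (F i * ∑ m, X m * P j m))
        + p * (∑ i, ∑ j, S i j * N j i) + p * (∑ i, ∑ j, S i j * P j i) := by
    have h : ∀ i j, S i j * (F i * (∑ m, X m * P j m) + p * (N j i + P j i))
        = S i j * (F i * ∑ m, X m * P j m) + p * (S i j * N j i) + p * (S i j * P j i) :=
      fun i j => by ring
    simp only [h, Finset.sum_add_distrib, ← Finset.mul_sum]
  have hFa : ∑ i, ∑ j, S i j * (F i * ∑ m, X m * P j m)
      = ∑ i, ∑ j, ∑ m, S i j * F j * (X m * P i m) := by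
    rw [Finset.sum_comm]
    exact Finset.sum_congr rfl fun i _ => Finset.sum_congr rfl fun j _ => by
      rw [hS j i]
      simp only [Finset.mul_sum]
      exact Finset.sum_congr rfl fun m _ => by ring
  have hPc : ∑ i, ∑ j, S i j * P j i = ∑ i, ∑ j, ∑ k, ∑ l, A i j k l * E k l * E i j := by
    rw [symsum P E hPE, expSQ]
  have hNb : ∑ i, ∑ j, S i j * N j i = ∑ i, ∑ j, ∑ k, ∑ l, A i j k l * E k l * Ep i j := by
    rw [symsum N Ep hNE, expSQ]
  rw [lhs_exp, hFa, hPc, hNb]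
  have r1 : ∑ i, ∑ j, ∑ k, ∑ l, (A i j k l - (1/2) * DA i j k l) * E i j * E k l
      = (∑ i, ∑ j, ∑ k, ∑ l, A i j k l * E k l * E i j)
        - (1/2) * ∑ i, ∑ j, ∑ k, ∑ l, DA i j k l * E k l * E j i := by
    have h : ∀ i j k l, (A i j k l - (1/2) * DA i j k l) * E i j * E k l
        = A i j k l * E k l * E i j - (1/2) * (DA i j k l * E k l * E j i) := by
      intro i j k l; rw [hE j i]; ring
    simp only [h, Finset.sum_sub_distrib, ← Finset.mul_sum]
  have r2 : ∑ i, ∑ j, ∑ k, ∑ l,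
        (DA i j k l * E k l * E j i + A i j k l * Ep k l * E j i + A i j k l * E k l * Ep j i)
      = (∑ i, ∑ j, ∑ k, ∑ l, DA i j k l * E k l * E j i)
        + (∑ i, ∑ j, ∑ k, ∑ l, A i j k l * E k l * Ep i j)
        + (∑ i, ∑ j, ∑ k, ∑ l, A i j k l * E k l * Ep i j) := by
    have swap1 : ∑ i, ∑ j, ∑ k, ∑ l, A i j k l * Ep k l * E j i
        = ∑ i, ∑ j, ∑ k, ∑ l, A i j k l * E k l * Ep i j := by
      rw [sum_swap4' (fun i j k l => A i j k l * Ep k l * E j i)]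
      exact Finset.sum_congr rfl fun i _ => Finset.sum_congr rfl fun j _ =>
        Finset.sum_congr rfl fun k _ => Finset.sum_congr rfl fun l _ => by
          rw [← hA2, hE l k]; ring
    have swap2 : ∑ i, ∑ j, ∑ k, ∑ l, A i j k l * E k l * Ep j i
        = ∑ i, ∑ j, ∑ k, ∑ l, A i j k l * E k l * Ep i j :=
      Finset.sum_congr rfl fun i _ => Finset.sum_congr rfl fun j _ =>
        Finset.sum_congr rfl fun k _ => Finset.sum_congr rfl fun l _ => by rw [hEp j i]
    simp only [Finset.sum_add_distrib]
    rw [swap1, swap2]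
  rw [r1, r2]
  ring

/-- Every continuous linear functional on Euclidean space is determined by its values on the
standard basis vectors. -/
lemma clm_decomp' {n : ℕ} (L : EuclideanSpace ℝ (Fin n) →L[ℝ] ℝ)
    (v : EuclideanSpace ℝ (Fin n)) :
    L v = ∑ m, v m * L (EuclideanSpace.single m 1) := by
  have hv := (EuclideanSpace.basisFun (Fin n) ℝ).sum_repr v
  simp only [EuclideanSpace.basisFun_apply, EuclideanSpace.basisFun_repr] at hv
  conv_lhs => rw [← hv]
  rw [map_sum]
  simp [smul_eq_mul]

theorem pointwise_multiplier_identity (n : ℕ)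
    (a4 : EuclideanSpace ℝ (Fin n) → Fin n → Fin n → Fin n → Fin n → ℝ)
    (ha4smooth : ∀ i j k l, ContDiff ℝ (⊤ : ℕ∞) (fun x => a4 x i j k l))
    (ha4sym : ∀ x i j k l, a4 x i j k l = a4 x j i k l ∧ a4 x i j k l = a4 x k l i j)
    (φ : EuclideanSpace ℝ (Fin n) → ℝ) (hφ : ContDiff ℝ 1 φ)
    (u : Fin n → EuclideanSpace ℝ (Fin n) → ℝ) (hu : ∀ i, ContDiff ℝ 2 (u i))
    (x : EuclideanSpace ℝ (Fin n)) (hx : x ≠ 0) :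
    odot (fun i j => sig a4 u x i j)
        (fun i j => pd (fun y => φ y * fderiv ℝ (u i) y y) x j)
      = φ x * (∑ i, ∑ j, ∑ k, ∑ l,
            (a4 x i j k l - (1/2) * fderiv ℝ (fun y => a4 y i j k l) x x)
              * eps u x i j * eps u x k l)
        + (1/2) * (φ x * fderiv ℝ
            (fun y => odot (fun i j => sig a4 u y i j) (fun i j => eps u y i j)) x x)
        + ∑ i, ∑ j, ∑ m, sig a4 u x i j * pd φ x j * (x m * pd (u i) x m) := by
  classical
  -- basic differentiability facts
  have hu' : ∀ i, Differentiable ℝ (fderiv ℝ (u i)) := fun i =>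
    ((hu i).fderiv_right (m := 1) (by norm_num)).differentiable one_ne_zero
  have hpd_diff : ∀ i j, Differentiable ℝ (fun y => pd (u i) y j) := by
    intro i j
    simp only [pd]
    exact (hu' i).clm_apply (differentiable_const _)
  have heps_diff : ∀ i j, Differentiable ℝ (fun y => eps u y i j) := by
    intro i j
    simp only [eps, div_eq_mul_inv]
    exact ((hpd_diff i j).add (hpd_diff j i)).mul_const _
  have hda : ∀ i j k l, Differentiable ℝ (fun y => a4 y i j k l) := fun i j k l =>
    (ha4smooth i j k l).differentiable (by simp)
  have hφd : Differentiable ℝ φ := hφ.differentiable one_ne_zero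
  -- second derivative symmetry
  have hsym : ∀ i (v w : EuclideanSpace ℝ (Fin n)),
      fderiv ℝ (fderiv ℝ (u i)) x v w = fderiv ℝ (fderiv ℝ (u i)) x w v := fun i =>
    ((hu i).contDiffAt.isSymmSndFDerivAt (by simp [minSmoothness_of_isRCLikeNormedField])).eq
  -- derivative of `pd (u i) · j`
  have hpdF : ∀ i j, fderiv ℝ (fun y => pd (u i) y j) x
      = (fderiv ℝ (fderiv ℝ (u i)) x).flip (EuclideanSpace.single j 1) := by
    intro i j
    have h : HasFDerivAt (fun y => pd (u i) y j)
        ((fderiv ℝ (fderiv ℝ (u i)) x).flip (EuclideanSpace.single j 1)) x := by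
      have h0 := (hu' i x).hasFDerivAt.clm_apply
        (hasFDerivAt_const (EuclideanSpace.single j (1:ℝ)) x)
      simpa [pd] using h0
    exact h.fderiv
  -- value of the derivative of `eps u · i j` in the radial direction
  have hEpval : ∀ i j, fderiv ℝ (fun y => eps u y i j) x x
      = ((∑ m, x m * fderiv ℝ (fderiv ℝ (u i)) x (EuclideanSpace.single m 1)
            (EuclideanSpace.single j 1))
        + ∑ m, x m * fderiv ℝ (fderiv ℝ (u j)) x (EuclideanSpace.single m 1)
            (EuclideanSpace.single i 1)) / 2 := by
    intro i j
    have he : (fun y => eps u y i j)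
        = fun y => (pd (u i) y j + pd (u j) y i) * (2:ℝ)⁻¹ := by
      funext y; rw [eps, div_eq_mul_inv]
    have hd : HasFDerivAt (fun y => (pd (u i) y j + pd (u j) y i) * (2:ℝ)⁻¹)
        (((2:ℝ)⁻¹) • (fderiv ℝ (fun y => pd (u i) y j) x
          + fderiv ℝ (fun y => pd (u j) y i) x)) x := by
      have h1 := ((hpd_diff i j x).hasFDerivAt.add (hpd_diff j i x).hasFDerivAt).mul_const
        ((2:ℝ)⁻¹)
      simpa using h1
    rw [he, hd.fderiv]
    simp only [ContinuousLinearMap.smul_apply, ContinuousLinearMap.add_apply, smul_eq_mul,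
      hpdF]
    rw [clm_decomp' ((fderiv ℝ (fderiv ℝ (u i)) x).flip (EuclideanSpace.single j 1)) x,
      clm_decomp' ((fderiv ℝ (fderiv ℝ (u j)) x).flip (EuclideanSpace.single i 1)) x]
    simp only [ContinuousLinearMap.flip_apply]
    ring
  -- derivative of the entries of `H(u)`
  have hL : ∀ i j, pd (fun y => φ y * fderiv ℝ (u i) y y) x j
      = pd φ x j * (∑ m, x m * pd (u i) x m)
        + φ x * ((∑ m, x m * fderiv ℝ (fderiv ℝ (u i)) x (EuclideanSpace.single j 1)
            (EuclideanSpace.single m 1)) + pd (u i) x j) := by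
    intro i j
    have h1 : HasFDerivAt (fun y => fderiv ℝ (u i) y y)
        ((fderiv ℝ (u i) x).comp (ContinuousLinearMap.id ℝ _)
          + (fderiv ℝ (fderiv ℝ (u i)) x).flip x) x :=
      (hu' i x).hasFDerivAt.clm_apply (hasFDerivAt_id x)
    have h2 : HasFDerivAt (fun y => φ y * fderiv ℝ (u i) y y)
        (φ x • ((fderiv ℝ (u i) x).comp (ContinuousLinearMap.id ℝ _)
            + (fderiv ℝ (fderiv ℝ (u i)) x).flip x)
          + (fderiv ℝ (u i) x x) • fderiv ℝ φ x) x :=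
      (hφd x).hasFDerivAt.mul h1
    simp only [pd]
    rw [h2.fderiv]
    simp only [ContinuousLinearMap.add_apply, ContinuousLinearMap.smul_apply,
      ContinuousLinearMap.coe_comp', Function.comp_apply, ContinuousLinearMap.flip_apply,
      ContinuousLinearMap.id_apply, smul_eq_mul]
    rw [clm_decomp' (fderiv ℝ (u i) x) x,
      clm_decomp' (fderiv ℝ (fderiv ℝ (u i)) x (EuclideanSpace.single j 1)) x]
    ring
  -- helper: derivative of a product at `x` in direction `x`
  have hprod : ∀ (c d : EuclideanSpace ℝ (Fin n) → ℝ), DifferentiableAt ℝ c x →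
      DifferentiableAt ℝ d x →
      fderiv ℝ (fun y => c y * d y) x x = c x * fderiv ℝ d x x + d x * fderiv ℝ c x x := by
    intro c d hc hd
    rw [fderiv_fun_mul hc hd]
    simp
  -- helper: derivative of a double sum at `x` in direction `x`
  have hsum2 : ∀ (g : Fin n → Fin n → EuclideanSpace ℝ (Fin n) → ℝ),
      (∀ k l, DifferentiableAt ℝ (g k l) x) →
      fderiv ℝ (fun y => ∑ k, ∑ l, g k l y) x x = ∑ k, ∑ l, fderiv ℝ (g k l) x x := by
    intro g hg
    rw [fderiv_fun_sum (fun k _ => DifferentiableAt.fun_sum (fun l _ => hg k l))]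
    rw [ContinuousLinearMap.sum_apply]
    exact Finset.sum_congr rfl fun k _ => by
      rw [fderiv_fun_sum (fun l _ => hg k l), ContinuousLinearMap.sum_apply]
  have hsigd : ∀ i j, DifferentiableAt ℝ
      (fun y => ∑ k, ∑ l, a4 y i j k l * eps u y k l) x := fun i j =>
    DifferentiableAt.fun_sum fun k _ => DifferentiableAt.fun_sum fun l _ =>
      ((hda i j k l) x).mul ((heps_diff k l) x)
  -- the radial derivative of `σ(u) ⊙ ε(u)`
  have hWx : fderiv ℝ
      (fun y => ∑ i, ∑ j, (∑ k, ∑ l, a4 y i j k l * eps u y k l) * eps u y j i) x x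
      = ∑ i, ∑ j, ∑ k, ∑ l,
          (fderiv ℝ (fun y => a4 y i j k l) x x * eps u x k l * eps u x j i
            + a4 x i j k l * fderiv ℝ (fun y => eps u y k l) x x * eps u x j i
            + a4 x i j k l * eps u x k l * fderiv ℝ (fun y => eps u y j i) x x) := by
    rw [hsum2 _ (fun i j => (hsigd i j).fun_mul ((heps_diff j i) x))]
    refine Finset.sum_congr rfl fun i _ => Finset.sum_congr rfl fun j _ => ?_
    rw [hprod _ _ (hsigd i j) ((heps_diff j i) x),
      hsum2 _ (fun k l => ((hda i j k l) x).fun_mul ((heps_diff k l) x))]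
    have h : ∀ k l, fderiv ℝ (fun y => a4 y i j k l * eps u y k l) x x
        = a4 x i j k l * fderiv ℝ (fun y => eps u y k l) x x
          + eps u x k l * fderiv ℝ (fun y => a4 y i j k l) x x :=
      fun k l => hprod _ _ ((hda i j k l) x) ((heps_diff k l) x)
    simp only [h, Finset.sum_mul, Finset.mul_sum, ← Finset.sum_add_distrib]
    exact Finset.sum_congr rfl fun k _ => Finset.sum_congr rfl fun l _ => by ring
  -- algebraic hypotheses
  have hA1 : ∀ i j k l, a4 x i j k l = a4 x j i k l := fun i j k l => (ha4sym x i j k l).1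
  have hA2 : ∀ i j k l, a4 x i j k l = a4 x k l i j := fun i j k l => (ha4sym x i j k l).2
  have hE : ∀ i j, eps u x i j = eps u x j i := by
    intro i j; simp only [eps]; ring
  have hEp : ∀ i j, fderiv ℝ (fun y => eps u y i j) x x
      = fderiv ℝ (fun y => eps u y j i) x x := by
    intro i j; rw [hEpval i j, hEpval j i]; ring
  have hPE : ∀ i j, pd (u i) x j + pd (u j) x i = 2 * eps u x i j := by
    intro i j; simp only [eps]; ring
  have hNE : ∀ i j, (∑ m, x m * fderiv ℝ (fderiv ℝ (u i)) x (EuclideanSpace.single j 1)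
        (EuclideanSpace.single m 1))
      + (∑ m, x m * fderiv ℝ (fderiv ℝ (u j)) x (EuclideanSpace.single i 1)
        (EuclideanSpace.single m 1))
      = 2 * fderiv ℝ (fun y => eps u y i j) x x := by
    intro i j
    rw [hEpval i j]
    have h1 : ∀ m, fderiv ℝ (fderiv ℝ (u i)) x (EuclideanSpace.single j 1)
        (EuclideanSpace.single m 1)
        = fderiv ℝ (fderiv ℝ (u i)) x (EuclideanSpace.single m 1)
          (EuclideanSpace.single j 1) := fun m => hsym i _ _
    have h2 : ∀ m, fderiv ℝ (fderiv ℝ (u j)) x (EuclideanSpace.single i 1)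
        (EuclideanSpace.single m 1)
        = fderiv ℝ (fderiv ℝ (u j)) x (EuclideanSpace.single m 1)
          (EuclideanSpace.single i 1) := fun m => hsym j _ _
    simp only [h1, h2]
    ring
  -- put everything together
  simp only [odot, sig]
  rw [hWx]
  refine Eq.trans
    (Finset.sum_congr rfl fun i _ => Finset.sum_congr rfl fun j _ => ?_)
    (key_alg n (fun i j k l => a4 x i j k l)
      (fun i j k l => fderiv ℝ (fun y => a4 y i j k l) x x)
      (fun i j => eps u x i j)
      (fun i j => fderiv ℝ (fun y => eps u y i j) x x)
      (fun a b => ∑ m, x m * fderiv ℝ (fderiv ℝ (u a)) x (EuclideanSpace.single b 1)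
        (EuclideanSpace.single m 1))
      (fun a b => pd (u a) x b)
      (fun j => pd φ x j) (fun m => x m) (φ x) hA1 hA2 hE hEp hPE hNE)
  rw [hL j i]
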